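/- Set convergence of the C-BP dual feasible sets: the sequence of closed convex sets D^n = {q ∈ L²(T) : (Φ^*q)(k h_n) + (h_n/2)|(Φ^*q)'(k h_n)| ≤ 1 for all 0 ≤ k ≤ P_n − 1} converges, in the sense of Kuratowski set convergence in L²(T), to D^∞ = {q ∈ L²(T) : (Φ^*q)(t) ≤ 1 for all t ∈ T}; that is, {q ∈ L²(T) : liminf_n dist(q, D^n) = 0} = D^∞ and {q ∈ L²(T) : limsup_n dist(q, D^n) = 0} = D^∞, where dist(q, C) = inf_{q'∈C} ‖q − q'‖_{L²}. -/

import Mathlib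

open MeasureTheory Filter
open scoped BigOperators
open scoped Topology
noncomputable section

/-- `p` belongs to `L²(T)` (torus represented by `1`-periodic functions on `ℝ`). -/
def MemL2T (p : ℝ → ℝ) : Prop :=
  Measurable p ∧ Function.Periodic p 1 ∧
    IntegrableOn (fun x => (p x)^2) (Set.Ioc (0:ℝ) 1)

/-- The adjoint operator `Φ^* q : y ↦ ∫_T φ(x,y) q(x) dx`. -/
def PhiStar (φ : ℝ → ℝ → ℝ) (q : ℝ → ℝ) : ℝ → ℝ :=
  fun t => ∫ x in Set.Ioc (0:ℝ) 1, φ x t * q x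

/-- The `L²(T)` distance between two functions. -/
def L2dist (q q' : ℝ → ℝ) : ℝ :=
  Real.sqrt (∫ x in Set.Ioc (0:ℝ) 1, (q x - q' x)^2)

/-- Membership in the dual feasible set `D^n` of the thin-grid C-BP. -/
def InDn (φ : ℝ → ℝ → ℝ) (P : ℕ → ℕ) (n : ℕ) (q : ℝ → ℝ) : Prop :=
  ∀ i : Fin (P n), PhiStar φ q ((i : ℝ) * (1 / (P n : ℝ)))
    + ((1 / (P n : ℝ)) / 2) * |deriv (PhiStar φ q) ((i : ℝ) * (1 / (P n : ℝ)))| ≤ 1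

/-- Membership in the dual feasible set `D^∞` of the positive Beurling lasso. -/
def InDinf (φ : ℝ → ℝ → ℝ) (q : ℝ → ℝ) : Prop :=
  ∀ t : ℝ, PhiStar φ q t ≤ 1

/-! ### Auxiliary lemmas -/

/-- The partial derivative of the kernel in the second variable. -/
def psi (φ : ℝ → ℝ → ℝ) : ℝ → ℝ → ℝ := fun x t => deriv (fun s => φ x s) t

lemma sq_integrable_imp_integrableOn {q : ℝ → ℝ} (hm : Measurable q)
    (h2 : IntegrableOn (fun x => (q x)^2) (Set.Ioc (0:ℝ) 1)) :
    IntegrableOn q (Set.Ioc (0:ℝ) 1) := by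
  have hg : IntegrableOn (fun x => (1 + (q x)^2)/2) (Set.Ioc (0:ℝ) 1) :=
    ((integrableOn_const (C := (1:ℝ)) measure_Ioc_lt_top.ne).add h2).div_const 2
  refine hg.mono' hm.aestronglyMeasurable ?_
  filter_upwards with x
  rw [Real.norm_eq_abs]
  nlinarith [sq_nonneg (|q x| - 1), sq_abs (q x), abs_nonneg (q x)]

lemma hasDerivAt_phi {φ : ℝ → ℝ → ℝ}
    (hφ : ContDiff ℝ (⊤ : ℕ∞) (fun p : ℝ × ℝ => φ p.1 p.2)) (x t : ℝ) :
    HasDerivAt (fun s => φ x s) (psi φ x t) t := by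
  have h : DifferentiableAt ℝ (fun s => φ x s) t := by
    have h1 : DifferentiableAt ℝ (fun p : ℝ × ℝ => φ p.1 p.2) (x, t) :=
      (hφ.differentiable (by simp)) (x, t)
    exact h1.comp t (DifferentiableAt.prodMk (differentiableAt_const x) differentiableAt_id)
  exact h.hasDerivAt

lemma psi_eq_fderiv {φ : ℝ → ℝ → ℝ}
    (hφ : ContDiff ℝ (⊤ : ℕ∞) (fun p : ℝ × ℝ => φ p.1 p.2)) (x t : ℝ) :
    psi φ x t = fderiv ℝ (fun p : ℝ × ℝ => φ p.1 p.2) (x, t) ((0:ℝ), (1:ℝ)) := by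
  have h1 : HasFDerivAt (fun p : ℝ × ℝ => φ p.1 p.2)
      (fderiv ℝ (fun p : ℝ × ℝ => φ p.1 p.2) (x, t)) (x, t) :=
    ((hφ.differentiable (by simp)) (x, t)).hasFDerivAt
  have h2 : HasDerivAt (fun s : ℝ => ((x, s) : ℝ × ℝ)) ((0:ℝ), (1:ℝ)) t :=
    HasDerivAt.prodMk (hasDerivAt_const t x) (hasDerivAt_id t)
  exact HasDerivAt.unique (hasDerivAt_phi hφ x t) (h1.comp_hasDerivAt t h2)

lemma psi_continuous {φ : ℝ → ℝ → ℝ}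
    (hφ : ContDiff ℝ (⊤ : ℕ∞) (fun p : ℝ × ℝ => φ p.1 p.2)) :
    Continuous (fun p : ℝ × ℝ => psi φ p.1 p.2) := by
  have : Continuous (fun p : ℝ × ℝ =>
      fderiv ℝ (fun p : ℝ × ℝ => φ p.1 p.2) p ((0:ℝ), (1:ℝ))) :=
    (ContinuousLinearMap.apply ℝ ℝ ((0:ℝ), (1:ℝ))).continuous.comp
      (hφ.continuous_fderiv (by simp))
  convert this using 2 with p
  exact psi_eq_fderiv hφ p.1 p.2

lemma psi_periodic {φ : ℝ → ℝ → ℝ}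
    (hφ_per₂ : ∀ x : ℝ, Function.Periodic (fun t => φ x t) 1) (x : ℝ) :
    Function.Periodic (fun t => psi φ x t) 1 := by
  intro t
  simp only [psi]
  have h : (fun s : ℝ => φ x (s + 1)) = (fun s => φ x s) := funext fun s => hφ_per₂ x s
  rw [← deriv_comp_add_const (fun s => φ x s) 1 t, h]

lemma bound_exists {φ : ℝ → ℝ → ℝ}
    (hφ_smooth : ContDiff ℝ (⊤ : ℕ∞) (fun p : ℝ × ℝ => φ p.1 p.2))
    (hφ_per₂ : ∀ x : ℝ, Function.Periodic (fun t => φ x t) 1) :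
    ∃ C : ℝ, 0 ≤ C ∧ ∀ x ∈ Set.Icc (0:ℝ) 1, ∀ t : ℝ, |φ x t| ≤ C ∧ |psi φ x t| ≤ C := by
  set g : ℝ × ℝ → ℝ := fun p => |φ p.1 p.2| + |psi φ p.1 p.2| with hg
  have hK : IsCompact ((Set.Icc (0:ℝ) 1) ×ˢ (Set.Icc (0:ℝ) 1)) :=
    isCompact_Icc.prod isCompact_Icc
  have hgc : ContinuousOn g ((Set.Icc (0:ℝ) 1) ×ˢ (Set.Icc (0:ℝ) 1)) :=
    ((hφ_smooth.continuous.abs.add (psi_continuous hφ_smooth).abs)).continuousOn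
  obtain ⟨C, hC⟩ := hK.exists_bound_of_continuousOn hgc
  refine ⟨max C 0, le_max_right _ _, fun x hx t => ?_⟩
  have hfr : Int.fract t ∈ Set.Icc (0:ℝ) 1 :=
    ⟨Int.fract_nonneg t, (Int.fract_lt_one t).le⟩
  have hmem : (x, Int.fract t) ∈ (Set.Icc (0:ℝ) 1) ×ˢ (Set.Icc (0:ℝ) 1) := ⟨hx, hfr⟩
  have hb := hC _ hmem
  rw [Real.norm_eq_abs, hg] at hb
  have h1 : φ x (Int.fract t) = φ x t := by
    have h := (hφ_per₂ x).sub_int_mul_eq (x := t) ⌊t⌋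
    simp only [mul_one] at h
    simp only [Int.fract]
    exact h
  have h2 : psi φ x (Int.fract t) = psi φ x t := by
    have h := (psi_periodic hφ_per₂ x).sub_int_mul_eq (x := t) ⌊t⌋
    simp only [mul_one] at h
    simp only [Int.fract]
    exact h
  have habs : |(|φ x (Int.fract t)| + |psi φ x (Int.fract t)|)| ≤ C := hb
  rw [h1, h2] at habs
  have h3 := le_abs_self (|φ x t| + |psi φ x t|)
  constructor <;>
    nlinarith [abs_nonneg (φ x t), abs_nonneg (psi φ x t), le_max_left C 0]

section WithBound

variable {φ : ℝ → ℝ → ℝ} {C : ℝ} {q q' : ℝ → ℝ}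

lemma integrand_integrable (hφ_smooth : ContDiff ℝ (⊤ : ℕ∞) (fun p : ℝ × ℝ => φ p.1 p.2))
    (hC : ∀ x ∈ Set.Icc (0:ℝ) 1, ∀ t : ℝ, |φ x t| ≤ C ∧ |psi φ x t| ≤ C)
    (hm : Measurable q) (hq : IntegrableOn q (Set.Ioc (0:ℝ) 1))
    (t : ℝ) : IntegrableOn (fun x => φ x t * q x) (Set.Ioc (0:ℝ) 1) := by
  refine (hq.abs.const_mul C).mono' ?_ ?_
  · exact ((hφ_smooth.continuous.comp (continuous_id.prodMk continuous_const)).measurable.mul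
      hm).aestronglyMeasurable
  · rw [ae_restrict_iff' measurableSet_Ioc]
    filter_upwards with x hx
    rw [Real.norm_eq_abs, abs_mul]
    exact mul_le_mul_of_nonneg_right ((hC x ⟨hx.1.le, hx.2⟩ t).1) (abs_nonneg _)

lemma phiStar_hasDerivAt (hφ_smooth : ContDiff ℝ (⊤ : ℕ∞) (fun p : ℝ × ℝ => φ p.1 p.2))
    (hC : ∀ x ∈ Set.Icc (0:ℝ) 1, ∀ t : ℝ, |φ x t| ≤ C ∧ |psi φ x t| ≤ C)
    (hm : Measurable q) (hq : IntegrableOn q (Set.Ioc (0:ℝ) 1))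
    (t₀ : ℝ) :
    HasDerivAt (PhiStar φ q) (∫ x in Set.Ioc (0:ℝ) 1, psi φ x t₀ * q x) t₀ := by
  have h := hasDerivAt_integral_of_dominated_loc_of_deriv_le
    (μ := volume.restrict (Set.Ioc (0:ℝ) 1)) (x₀ := t₀)
    (F := fun t x => φ x t * q x) (F' := fun t x => psi φ x t * q x)
    (bound := fun x => C * |q x|) Filter.univ_mem
    (Eventually.of_forall fun t =>
      ((hφ_smooth.continuous.comp (continuous_id.prodMk continuous_const)).measurable.mul
        hm).aestronglyMeasurable)
    (integrand_integrable hφ_smooth hC hm hq t₀)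
    (((psi_continuous hφ_smooth).comp (continuous_id.prodMk continuous_const)).measurable.mul
        hm).aestronglyMeasurable
    ?_ (hq.abs.const_mul C) ?_
  · exact h.2
  · rw [ae_restrict_iff' measurableSet_Ioc]
    filter_upwards with x hx t _
    rw [Real.norm_eq_abs, abs_mul]
    exact mul_le_mul_of_nonneg_right ((hC x ⟨hx.1.le, hx.2⟩ t).2) (abs_nonneg _)
  · filter_upwards with x t _
    exact (hasDerivAt_phi hφ_smooth x t).mul_const (q x)

lemma phiStar_deriv_bound (hφ_smooth : ContDiff ℝ (⊤ : ℕ∞) (fun p : ℝ × ℝ => φ p.1 p.2))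
    (hC : ∀ x ∈ Set.Icc (0:ℝ) 1, ∀ t : ℝ, |φ x t| ≤ C ∧ |psi φ x t| ≤ C)
    (hm : Measurable q) (hq : IntegrableOn q (Set.Ioc (0:ℝ) 1)) (t : ℝ) :
    |deriv (PhiStar φ q) t| ≤ C * ∫ x in Set.Ioc (0:ℝ) 1, |q x| := by
  rw [(phiStar_hasDerivAt hφ_smooth hC hm hq t).deriv]
  calc |∫ x in Set.Ioc (0:ℝ) 1, psi φ x t * q x|
      ≤ ∫ x in Set.Ioc (0:ℝ) 1, |psi φ x t * q x| := by
        simpa [Real.norm_eq_abs, abs_mul] using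
          norm_integral_le_integral_norm (fun x => psi φ x t * q x)
            (μ := volume.restrict (Set.Ioc (0:ℝ) 1))
    _ ≤ ∫ x in Set.Ioc (0:ℝ) 1, C * |q x| := by
        refine integral_mono_of_nonneg ?_ (hq.abs.const_mul C) ?_
        · filter_upwards with x; positivity
        · refine (ae_restrict_iff' measurableSet_Ioc).mpr ?_
          filter_upwards with x hx
          rw [abs_mul]
          exact mul_le_mul_of_nonneg_right ((hC x ⟨hx.1.le, hx.2⟩ t).2) (abs_nonneg _)
    _ = C * ∫ x in Set.Ioc (0:ℝ) 1, |q x| := integral_const_mul C _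

lemma phiStar_lip (hφ_smooth : ContDiff ℝ (⊤ : ℕ∞) (fun p : ℝ × ℝ => φ p.1 p.2))
    (hC : ∀ x ∈ Set.Icc (0:ℝ) 1, ∀ t : ℝ, |φ x t| ≤ C ∧ |psi φ x t| ≤ C)
    (hm : Measurable q) (hq : IntegrableOn q (Set.Ioc (0:ℝ) 1)) (a b : ℝ) :
    |PhiStar φ q b - PhiStar φ q a|
      ≤ (C * ∫ x in Set.Ioc (0:ℝ) 1, |q x|) * |b - a| := by
  have hdiff : ∀ y ∈ (Set.univ : Set ℝ), DifferentiableAt ℝ (PhiStar φ q) y :=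
    fun y _ => (phiStar_hasDerivAt hφ_smooth hC hm hq y).differentiableAt
  have hbd : ∀ y ∈ (Set.univ : Set ℝ),
      ‖deriv (PhiStar φ q) y‖ ≤ C * ∫ x in Set.Ioc (0:ℝ) 1, |q x| :=
    fun y _ => phiStar_deriv_bound hφ_smooth hC hm hq y
  have := convex_univ.norm_image_sub_le_of_norm_deriv_le hdiff hbd
    (Set.mem_univ a) (Set.mem_univ b)
  simpa [Real.norm_eq_abs] using this

lemma phiStar_diff_bound (hφ_smooth : ContDiff ℝ (⊤ : ℕ∞) (fun p : ℝ × ℝ => φ p.1 p.2))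
    (hC : ∀ x ∈ Set.Icc (0:ℝ) 1, ∀ t : ℝ, |φ x t| ≤ C ∧ |psi φ x t| ≤ C)
    (hm : Measurable q) (hq : IntegrableOn q (Set.Ioc (0:ℝ) 1))
    (hm' : Measurable q') (hq' : IntegrableOn q' (Set.Ioc (0:ℝ) 1)) (t : ℝ) :
    |PhiStar φ q t - PhiStar φ q' t| ≤ C * ∫ x in Set.Ioc (0:ℝ) 1, |q x - q' x| := by
  have hsub : PhiStar φ q t - PhiStar φ q' t
      = ∫ x in Set.Ioc (0:ℝ) 1, φ x t * (q x - q' x) := by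
    rw [PhiStar, PhiStar, ← integral_sub (integrand_integrable hφ_smooth hC hm hq t)
      (integrand_integrable hφ_smooth hC hm' hq' t)]
    congr 1; ext x; ring
  rw [hsub]
  calc |∫ x in Set.Ioc (0:ℝ) 1, φ x t * (q x - q' x)|
      ≤ ∫ x in Set.Ioc (0:ℝ) 1, |φ x t * (q x - q' x)| := by
        simpa [Real.norm_eq_abs, abs_mul] using
          norm_integral_le_integral_norm (fun x => φ x t * (q x - q' x))
            (μ := volume.restrict (Set.Ioc (0:ℝ) 1))
    _ ≤ ∫ x in Set.Ioc (0:ℝ) 1, C * |q x - q' x| := by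
        refine integral_mono_of_nonneg ?_ ((hq.sub hq').abs.const_mul C) ?_
        · filter_upwards with x; positivity
        · refine (ae_restrict_iff' measurableSet_Ioc).mpr ?_
          filter_upwards with x hx
          rw [abs_mul]
          exact mul_le_mul_of_nonneg_right ((hC x ⟨hx.1.le, hx.2⟩ t).1) (abs_nonneg _)
    _ = C * ∫ x in Set.Ioc (0:ℝ) 1, |q x - q' x| := integral_const_mul C _

end WithBound

/-- AM-GM bound for the `L¹` norm in terms of the `L²` norm squared. -/
lemma int_abs_le {f : ℝ → ℝ} (hm : Measurable f)
    (h2 : IntegrableOn (fun x => (f x)^2) (Set.Ioc (0:ℝ) 1)) {a : ℝ} (ha : 0 < a) :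
    ∫ x in Set.Ioc (0:ℝ) 1, |f x|
      ≤ (a + (∫ x in Set.Ioc (0:ℝ) 1, (f x)^2) / a) / 2 := by
  have hf1 : IntegrableOn f (Set.Ioc (0:ℝ) 1) := sq_integrable_imp_integrableOn hm h2
  have hpt : ∀ x, |f x| ≤ (a + (f x)^2 / a) / 2 := by
    intro x
    have heq : (a + (f x)^2 / a) / 2 = (a^2 + (f x)^2) / (2*a) := by
      field_simp
    rw [heq, le_div_iff₀ (by positivity)]
    nlinarith [sq_nonneg (|f x| - a), sq_abs (f x), ha]
  calc ∫ x in Set.Ioc (0:ℝ) 1, |f x|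
      ≤ ∫ x in Set.Ioc (0:ℝ) 1, (a + (f x)^2 / a) / 2 := by
        refine integral_mono hf1.abs ?_ hpt
        exact ((integrableOn_const (C := a) measure_Ioc_lt_top.ne).add
          (h2.div_const a)).div_const 2
    _ = (a + (∫ x in Set.Ioc (0:ℝ) 1, (f x)^2) / a) / 2 := by
        rw [integral_div, integral_add (integrableOn_const (C := a) measure_Ioc_lt_top.ne)
          (h2.div_const a), integral_div, setIntegral_const]
        simp [Real.volume_Ioc]

lemma phiStar_periodic {φ : ℝ → ℝ → ℝ}
    (hφ_per₂ : ∀ x : ℝ, Function.Periodic (fun t => φ x t) 1) (q : ℝ → ℝ) :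
    Function.Periodic (PhiStar φ q) 1 := by
  intro t
  simp only [PhiStar]
  congr 1
  ext x
  rw [show φ x (t + 1) = φ x t from hφ_per₂ x t]

lemma phiStar_smul (φ : ℝ → ℝ → ℝ) (q : ℝ → ℝ) (c : ℝ) :
    PhiStar φ (fun x => c * q x) = fun t => c * PhiStar φ q t := by
  funext t
  simp only [PhiStar]
  rw [← integral_const_mul]
  congr 1; ext x; ring

lemma memL2T_zero : MemL2T (fun _ => (0:ℝ)) :=
  ⟨measurable_const, fun _ => rfl, by simp [integrableOn_const]⟩

lemma phiStar_zero (φ : ℝ → ℝ → ℝ) : PhiStar φ (fun _ => (0:ℝ)) = fun _ => 0 := by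
  funext t; simp [PhiStar]

lemma inDn_zero (φ : ℝ → ℝ → ℝ) (P : ℕ → ℕ) (n : ℕ) :
    InDn φ P n (fun _ => (0:ℝ)) := by
  intro i
  rw [phiStar_zero]
  simp

lemma sub_sq_integrable {q q' : ℝ → ℝ} (hq : MemL2T q) (hq' : MemL2T q') :
    IntegrableOn (fun x => (q x - q' x)^2) (Set.Ioc (0:ℝ) 1) := by
  have hg : IntegrableOn (fun x => 2*(q x)^2 + 2*(q' x)^2) (Set.Ioc (0:ℝ) 1) :=
    (hq.2.2.const_mul 2).add (hq'.2.2.const_mul 2)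
  refine hg.mono' ?_ ?_
  · exact (((hq.1.sub hq'.1).pow_const 2)).aestronglyMeasurable
  · filter_upwards with x
    rw [Real.norm_eq_abs, abs_of_nonneg (sq_nonneg _)]
    nlinarith [sq_nonneg (q x + q' x)]

set_option maxHeartbeats 1000000 in
/-- **Set convergence of the C-BP dual feasible sets.**  The sets
`D^n = {q ∈ L²(T) : (Φ^*q)(kh_n) + (h_n/2)|(Φ^*q)'(kh_n)| ≤ 1 ∀k}` converge in the
sense of Kuratowski set convergence in `L²(T)` to
`D^∞ = {q : Φ^*q ≤ 1}`: for every `q ∈ L²(T)`,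
`liminf_n dist(q, D^n) = 0 ↔ q ∈ D^∞` and `limsup_n dist(q, D^n) = 0 ↔ q ∈ D^∞`. -/
theorem cbp_dual_feasible_sets_convergence
    (φ : ℝ → ℝ → ℝ)
    (hφ_smooth : ContDiff ℝ (⊤ : ℕ∞) (fun p : ℝ × ℝ => φ p.1 p.2))
    (hφ_per₁ : ∀ t : ℝ, Function.Periodic (fun x => φ x t) 1)
    (hφ_per₂ : ∀ x : ℝ, Function.Periodic (fun t => φ x t) 1)
    (P : ℕ → ℕ) (hP : ∀ n, 0 < P n) (hPnested : ∀ n, P n ∣ P (n + 1))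
    (hPfine : Tendsto (fun n => (P n : ℝ)) atTop atTop) :
    ∀ q : ℝ → ℝ, MemL2T q →
      ((liminf (fun n => sInf {dd : ℝ | ∃ q' : ℝ → ℝ,
          MemL2T q' ∧ InDn φ P n q' ∧ dd = L2dist q q'}) atTop = 0 ↔ InDinf φ q) ∧
       (limsup (fun n => sInf {dd : ℝ | ∃ q' : ℝ → ℝ,
          MemL2T q' ∧ InDn φ P n q' ∧ dd = L2dist q q'}) atTop = 0 ↔ InDinf φ q)) := by
  obtain ⟨C, hC0, hC⟩ := bound_exists hφ_smooth hφ_per₂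
  intro q hq
  have hqm : Measurable q := hq.1
  have hqi : IntegrableOn q (Set.Ioc (0:ℝ) 1) := sq_integrable_imp_integrableOn hqm hq.2.2
  set S : ℕ → Set ℝ := fun n => {dd : ℝ | ∃ q' : ℝ → ℝ,
      MemL2T q' ∧ InDn φ P n q' ∧ dd = L2dist q q'} with hS
  set d : ℕ → ℝ := fun n => sInf (S n) with hd
  have hSne : ∀ n, (S n).Nonempty := fun n =>
    ⟨L2dist q (fun _ => 0), ⟨fun _ => 0, memL2T_zero, inDn_zero φ P n, rfl⟩⟩
  have hSbdd : ∀ n, BddBelow (S n) := by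
    intro n
    refine ⟨0, fun x hx => ?_⟩
    obtain ⟨q', -, -, rfl⟩ := hx
    exact Real.sqrt_nonneg _
  have hd0 : ∀ n, 0 ≤ d n := by
    intro n
    refine Real.sInf_nonneg fun x hx => ?_
    obtain ⟨q', -, -, rfl⟩ := hx
    exact Real.sqrt_nonneg _
  have hdB : ∀ n, d n ≤ L2dist q (fun _ => 0) := fun n =>
    csInf_le (hSbdd n) ⟨fun _ => 0, memL2T_zero, inDn_zero φ P n, rfl⟩
  have hinv : Tendsto (fun n => 1 / (P n : ℝ)) atTop (𝓝 0) := by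
    simpa [one_div, Function.comp_def] using tendsto_inv_atTop_zero.comp hPfine
  have hPn : ∀ n, (0:ℝ) < (P n : ℝ) := fun n => by exact_mod_cast hP n
  -- Part A : q ∈ D^∞ implies d → 0
  have partA : InDinf φ q → Tendsto d atTop (𝓝 0) := by
    intro hDinf
    have Iq_nonneg : 0 ≤ ∫ x in Set.Ioc (0:ℝ) 1, |q x| :=
      integral_nonneg fun x => abs_nonneg _
    set Iq := ∫ x in Set.Ioc (0:ℝ) 1, |q x| with hIq
    set M := C * Iq with hM
    have hM0 : 0 ≤ M := mul_nonneg hC0 Iq_nonneg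
    set N := L2dist q (fun _ => 0) with hN
    have hN0 : 0 ≤ N := Real.sqrt_nonneg _
    rw [Metric.tendsto_atTop]
    intro ε hε
    set s : ℝ := min (ε / (2*(N+1))) 1 with hs
    have hs0 : 0 < s := lt_min (by positivity) one_pos
    have hs1 : s ≤ 1 := min_le_right _ _
    have hev : ∀ᶠ n in atTop, (1 / (P n : ℝ)) / 2 * M < s :=
      Tendsto.eventually_lt_const hs0 (by simpa using (hinv.div_const 2).mul_const M)
    rw [eventually_atTop] at hev
    obtain ⟨n₀, hn₀⟩ := hev
    refine ⟨n₀, fun n hn => ?_⟩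
    have hgrid := hn₀ n hn
    set q₂ : ℝ → ℝ := fun x => (1 - s) * q x with hq₂
    have hq₂mem : MemL2T q₂ := by
      refine ⟨hqm.const_mul _, fun x => by simp [hq₂, hq.2.1 x], ?_⟩
      have : (fun x => (q₂ x)^2) = fun x => (1-s)^2 * (q x)^2 := by
        funext x; simp [hq₂]; ring
      rw [this]
      exact hq.2.2.const_mul _
    have hps : PhiStar φ q₂ = fun t => (1 - s) * PhiStar φ q t := phiStar_smul φ q _
    have h1s0 : 0 ≤ 1 - s := by linarith
    have hq₂D : InDn φ P n q₂ := by
      intro i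
      set g : ℝ := (i : ℝ) * (1 / (P n : ℝ)) with hg
      have hderiv : deriv (PhiStar φ q₂) g = (1 - s) * deriv (PhiStar φ q) g := by
        rw [hps]
        exact deriv_const_mul _ (phiStar_hasDerivAt hφ_smooth hC hqm hqi g).differentiableAt
      have hDb : |deriv (PhiStar φ q) g| ≤ M := phiStar_deriv_bound hφ_smooth hC hqm hqi g
      have hval : PhiStar φ q g ≤ 1 := hDinf g
      have hval2 : PhiStar φ q₂ g = (1 - s) * PhiStar φ q g := by rw [hps]
      rw [hval2, hderiv, abs_mul, abs_of_nonneg h1s0]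
      have h2 : (1 - s) * |deriv (PhiStar φ q) g| ≤ M := by
        calc (1 - s) * |deriv (PhiStar φ q) g| ≤ 1 * |deriv (PhiStar φ q) g| := by
              exact mul_le_mul_of_nonneg_right (by linarith) (abs_nonneg _)
          _ ≤ M := by rw [one_mul]; exact hDb
      have hh0 : 0 ≤ 1 / (P n : ℝ) := by positivity
      nlinarith [abs_nonneg (deriv (PhiStar φ q) g)]
    have hdist : L2dist q q₂ = s * N := by
      rw [L2dist, hN, L2dist]
      have : (fun x => (q x - q₂ x)^2) = fun x => s^2 * (q x - 0)^2 := by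
        funext x; simp [hq₂]; ring
      rw [this, integral_const_mul, Real.sqrt_mul (sq_nonneg s), Real.sqrt_sq hs0.le]
    have hdn : d n ≤ s * N :=
      hdist ▸ csInf_le (hSbdd n) ⟨q₂, hq₂mem, hq₂D, rfl⟩
    have hsN : s * N < ε := by
      have h1 : s ≤ ε / (2*(N+1)) := min_le_left _ _
      have : s * N ≤ ε / (2*(N+1)) * N :=
        mul_le_mul_of_nonneg_right h1 hN0
      have h2 : ε / (2*(N+1)) * N < ε := by
        rw [div_mul_eq_mul_div, div_lt_iff₀ (by positivity)]
        nlinarith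
      linarith
    rw [Real.dist_eq, sub_zero, abs_of_nonneg (hd0 n)]
    linarith
  -- Part B : liminf d = 0 implies q ∈ D^∞
  have partB : liminf d atTop = 0 → InDinf φ q := by
    intro hlim t
    -- reduce to the fractional part
    have hper : PhiStar φ q (Int.fract t) = PhiStar φ q t := by
      have h := (phiStar_periodic hφ_per₂ q).sub_int_mul_eq (x := t) ⌊t⌋
      simp only [mul_one] at h
      simp only [Int.fract]
      exact h
    rw [← hper]
    set t' := Int.fract t with ht'
    have ht'0 : 0 ≤ t' := Int.fract_nonneg t
    have ht'1 : t' < 1 := Int.fract_lt_one t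
    have Iq_nonneg : 0 ≤ ∫ x in Set.Ioc (0:ℝ) 1, |q x| :=
      integral_nonneg fun x => abs_nonneg _
    set Iq := ∫ x in Set.Ioc (0:ℝ) 1, |q x| with hIq
    set K : ℝ := C + C * (Iq + 1) + 1 with hK
    have hK0 : 0 < K := by positivity
    refine le_of_forall_sub_le fun δ hδ => ?_
    rw [sub_le_iff_le_add']
    set ε : ℝ := min 1 (δ / K) with hε
    have hε0 : 0 < ε := lt_min one_pos (by positivity)
    have hε1 : ε ≤ 1 := min_le_left _ _
    have hεK : ε * K ≤ δ := by
      have h1 : ε ≤ δ / K := min_le_right _ _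
      calc ε * K ≤ (δ / K) * K := mul_le_mul_of_nonneg_right h1 hK0.le
        _ = δ := by field_simp
    -- find a suitable n and q'
    have hfreq : ∃ᶠ n in atTop, d n < ε^2 :=
      frequently_lt_of_liminf_lt (isCoboundedUnder_ge_of_le atTop hdB)
        (by rw [hlim]; positivity)
    have hev : ∀ᶠ n in atTop, 1 / (P n : ℝ) < ε :=
      Tendsto.eventually_lt_const hε0 hinv
    obtain ⟨n, hdn, hhn⟩ := (hfreq.and_eventually hev).exists
    obtain ⟨dd, ⟨q', hq'mem, hq'D, rfl⟩, hddlt⟩ := (csInf_lt_iff (hSbdd n) (hSne n)).1 hdn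
    have hq'm : Measurable q' := hq'mem.1
    have hq'i : IntegrableOn q' (Set.Ioc (0:ℝ) 1) :=
      sq_integrable_imp_integrableOn hq'm hq'mem.2.2
    -- L² and L¹ bounds on q - q'
    have hsqint : IntegrableOn (fun x => (q x - q' x)^2) (Set.Ioc (0:ℝ) 1) :=
      sub_sq_integrable hq hq'mem
    have hsq : (∫ x in Set.Ioc (0:ℝ) 1, (q x - q' x)^2) < (ε^2)^2 := by
      have := hddlt
      rw [L2dist] at this
      exact (Real.sqrt_lt' (by positivity)).1 this
    have habs : (∫ x in Set.Ioc (0:ℝ) 1, |q x - q' x|) ≤ ε^2 := by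
      have h1 := int_abs_le (f := fun x => q x - q' x) (hqm.sub hq'm) hsqint (a := ε^2) (by positivity)
      have h2 : (∫ x in Set.Ioc (0:ℝ) 1, (q x - q' x)^2) / ε^2 ≤ ε^2 := by
        rw [div_le_iff₀ (by positivity)]
        nlinarith
      linarith
    -- L¹ bound on q'
    have hIq' : (∫ x in Set.Ioc (0:ℝ) 1, |q' x|) ≤ Iq + 1 := by
      have h1 : (∫ x in Set.Ioc (0:ℝ) 1, |q' x|)
          ≤ ∫ x in Set.Ioc (0:ℝ) 1, (|q x| + |q x - q' x|) := by
        have hsubint : IntegrableOn (fun x => |q x - q' x|) (Set.Ioc (0:ℝ) 1) :=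
          (hqi.sub hq'i).abs
        refine integral_mono hq'i.abs (hqi.abs.add hsubint) fun x => ?_
        calc |q' x| = |q x - (q x - q' x)| := by ring_nf
          _ ≤ |q x| + |q x - q' x| := abs_sub _ _
      have hsubint : IntegrableOn (fun x => |q x - q' x|) (Set.Ioc (0:ℝ) 1) :=
        (hqi.sub hq'i).abs
      rw [integral_add hqi.abs hsubint] at h1
      have hε2 : ε^2 ≤ 1 := by nlinarith
      linarith
    -- grid point next to t'
    set k : ℤ := ⌊t' * (P n : ℝ)⌋ with hk
    have hk0 : 0 ≤ k := Int.floor_nonneg.2 (mul_nonneg ht'0 (hPn n).le)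
    have hklt : k < (P n : ℤ) := by
      rw [hk, Int.floor_lt]
      exact_mod_cast mul_lt_of_lt_one_left (hPn n) ht'1
    set i : Fin (P n) := ⟨k.toNat, by omega⟩ with hi
    have hcast : ((i : Fin (P n)) : ℝ) = (k : ℝ) := by
      have h := Int.toNat_of_nonneg hk0
      simp only [hi]
      exact_mod_cast congrArg (Int.cast : ℤ → ℝ) h
    set g : ℝ := (k : ℝ) * (1 / (P n : ℝ)) with hgdef
    have hg_le : g ≤ t' := by
      rw [hgdef, mul_one_div, div_le_iff₀ (hPn n)]
      exact Int.floor_le _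
    have hg_close : t' - g ≤ 1 / (P n : ℝ) := by
      have h2 := Int.lt_floor_add_one (t' * (P n : ℝ))
      have h3 : t' < ((k:ℝ) + 1) / (P n : ℝ) := by
        rw [lt_div_iff₀ (hPn n)]
        exact_mod_cast h2
      rw [add_div] at h3
      rw [hgdef, mul_one_div]
      linarith
    -- grid constraint
    have hΦg : PhiStar φ q' g ≤ 1 := by
      have h := hq'D i
      rw [hcast] at h
      have h2 : 0 ≤ ((1 / (P n : ℝ)) / 2) * |deriv (PhiStar φ q') ((k:ℝ) * (1 / (P n : ℝ)))| := by
        positivity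
      rw [← hgdef] at h
      linarith
    -- mean value estimate
    have e2 : PhiStar φ q' t' - PhiStar φ q' g ≤ (C * (Iq + 1)) * (1 / (P n : ℝ)) := by
      refine le_trans (le_abs_self _)
        (le_trans (phiStar_lip hφ_smooth hC hq'm hq'i g t') ?_)
      have habs' : |t' - g| ≤ 1 / (P n : ℝ) := by
        rw [abs_of_nonneg (by linarith)]; exact hg_close
      refine mul_le_mul (mul_le_mul_of_nonneg_left hIq' hC0) habs' (abs_nonneg _)
        (by positivity)
    -- perturbation estimate
    have e1 : PhiStar φ q t' - PhiStar φ q' t' ≤ C * ε^2 :=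
      le_trans (le_abs_self _)
        (le_trans (phiStar_diff_bound hφ_smooth hC hqm hqi hq'm hq'i t')
          (mul_le_mul_of_nonneg_left habs hC0))
    have hCIq : 0 ≤ C * (Iq + 1) := by positivity
    have e3 : (C * (Iq + 1)) * (1 / (P n : ℝ)) ≤ (C * (Iq + 1)) * ε :=
      mul_le_mul_of_nonneg_left hhn.le hCIq
    have hε2ε : C * ε^2 ≤ C * ε := by
      calc C * ε^2 = (C*ε)*ε := by ring
        _ ≤ (C*ε)*1 := mul_le_mul_of_nonneg_left hε1 (mul_nonneg hC0 hε0.le)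
        _ = C*ε := by ring
    nlinarith [hεK, hε0.le]
  -- assemble
  have hbdd_below : IsBoundedUnder (· ≥ ·) atTop d :=
    isBoundedUnder_of ⟨0, hd0⟩
  have hbdd_above : IsBoundedUnder (· ≤ ·) atTop d :=
    isBoundedUnder_of ⟨L2dist q (fun _ => 0), hdB⟩
  constructor
  · constructor
    · exact partB
    · intro hDinf
      exact (partA hDinf).liminf_eq
  · constructor
    · intro hlimsup
      apply partB
      have h1 : liminf d atTop ≤ limsup d atTop := liminf_le_limsup hbdd_above hbdd_below
      have h2 : (0:ℝ) ≤ liminf d atTop :=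
        le_liminf_of_le (isCoboundedUnder_ge_of_le atTop hdB)
          (Eventually.of_forall hd0)
      rw [hlimsup] at h1
      linarith
    · intro hDinf
      exact (partA hDinf).limsup_eq
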